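/- arXiv:1206.0994 — 4 statements merged into one kernel-verified Lean document; each statement's English description precedes it below -/
import Mathlib

section
/- Let Y be a random variable taking values in a finite set {y_1,…,y_n} ⊂ S ⊆ ℝ^k with probability measure v such that μ := E_v[Y] ∈ ri(S). Then for any Bregman divergence d_φ, the function s ↦ E_v[d_φ(Y, s)] over s ∈ ri(S) has the unique minimizer s* = μ. -/
open scoped RealInnerProductSpace BigOperators

/-! Expanding `d_φ(y, s) = φ y - φ s - ⟪y - s, ∇φ s⟫`, the term linear in `y` averages to
`⟪μ - s, ∇φ s⟫`, which gives `E[d_φ(Y, s)] - E[d_φ(Y, μ)] = d_φ(μ, s)`. The right side is positive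
for `s ≠ μ`: on the line through `s` and `μ`, strict convexity puts every secant slope from `s`
strictly above the derivative at `s`. -/

/-- The Bregman divergence associated to a convex function `φ` with gradient map `g`. -/
noncomputable def bregman {k : ℕ} (φ : EuclideanSpace ℝ (Fin k) → ℝ)
    (g : EuclideanSpace ℝ (Fin k) → EuclideanSpace ℝ (Fin k))
    (p q : EuclideanSpace ℝ (Fin k)) : ℝ :=
  φ p - φ q - ⟪p - q, g q⟫

theorem StrictConvexOn.comp_affineMap_of_injective {E F : Type*} [AddCommGroup E] [Module ℝ E]
    [AddCommGroup F] [Module ℝ F] {s : Set F} {φ : F → ℝ} (hφ : StrictConvexOn ℝ s φ)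
    (L : E →ᵃ[ℝ] F) (hL : Function.Injective L) : StrictConvexOn ℝ (L ⁻¹' s) (φ ∘ L) := by
  refine ⟨hφ.1.affine_preimage L, fun a ha b hb hab p q hp hq hpq => ?_⟩
  simpa only [Function.comp_apply, Convex.combo_affine_apply hpq] using
    hφ.2 ha hb (hL.ne hab) hp hq hpq

theorem StrictConvexOn.add_inner_gradient_lt {E : Type*} [NormedAddCommGroup E]
    [InnerProductSpace ℝ E] [CompleteSpace E] {S : Set E} {φ : E → ℝ} {G x z : E}
    (hφ : StrictConvexOn ℝ S φ) (hx : x ∈ S) (hz : z ∈ S) (hxz : x ≠ z)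
    (hG : HasGradientAt φ G x) : φ x + ⟪G, z - x⟫ < φ z := by
  let L : ℝ →ᵃ[ℝ] E := AffineMap.lineMap x z
  have hconv : StrictConvexOn ℝ (L ⁻¹' S) (φ ∘ L) :=
    hφ.comp_affineMap_of_injective L (AffineMap.lineMap_injective ℝ hxz)
  have hderiv : HasDerivAt (φ ∘ L) ⟪G, z - x⟫ 0 := by
    have hG' : HasFDerivAt φ (InnerProductSpace.toDual ℝ E G) (L 0) := by
      simpa [L] using hG.hasFDerivAt
    exact hG'.comp_hasDerivAt 0 AffineMap.hasDerivAt_lineMap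
  have hslope := hconv.lt_slope_of_hasDerivAt (x := 0) (y := 1) (by simpa [L]) (by simpa [L])
    zero_lt_one hderiv
  simp only [slope_def_field, Function.comp_apply, L, AffineMap.lineMap_apply_zero,
    AffineMap.lineMap_apply_one, sub_zero, div_one] at hslope
  linarith

theorem bregman_pos {k : ℕ} {S : Set (EuclideanSpace ℝ (Fin k))}
    {φ : EuclideanSpace ℝ (Fin k) → ℝ} {g : EuclideanSpace ℝ (Fin k) → EuclideanSpace ℝ (Fin k)}
    {p q : EuclideanSpace ℝ (Fin k)} (hφ : StrictConvexOn ℝ S φ) (hp : p ∈ S) (hq : q ∈ S)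
    (hpq : p ≠ q) (hg : HasGradientAt φ (g q) q) : 0 < bregman φ g p q := by
  have := hφ.add_inner_gradient_lt hq hp hpq.symm hg
  rw [real_inner_comm] at this
  unfold bregman
  linarith

theorem sum_mul_bregman {k : ℕ} {ι : Type*} [Fintype ι] (φ : EuclideanSpace ℝ (Fin k) → ℝ)
    (g : EuclideanSpace ℝ (Fin k) → EuclideanSpace ℝ (Fin k)) (y : ι → EuclideanSpace ℝ (Fin k))
    {v : ι → ℝ} (hv1 : ∑ i, v i = 1) (q : EuclideanSpace ℝ (Fin k)) :
    ∑ i, v i * bregman φ g (y i) q =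
      ∑ i, v i * φ (y i) - φ q - ⟪∑ i, v i • y i - q, g q⟫ := by
  have hmean : ∑ i, v i • (y i - q) = ∑ i, v i • y i - q := by
    simp only [smul_sub, Finset.sum_sub_distrib, ← Finset.sum_smul, hv1, one_smul]
  simp only [bregman, mul_sub, Finset.sum_sub_distrib, ← Finset.sum_mul, hv1, one_mul,
    ← hmean, sum_inner, real_inner_smul_left]

theorem sum_mul_bregman_sub_sum_mul_bregman_mean {k : ℕ} {ι : Type*} [Fintype ι]
    (φ : EuclideanSpace ℝ (Fin k) → ℝ) (g : EuclideanSpace ℝ (Fin k) → EuclideanSpace ℝ (Fin k))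
    (y : ι → EuclideanSpace ℝ (Fin k)) {v : ι → ℝ} (hv1 : ∑ i, v i = 1)
    (s : EuclideanSpace ℝ (Fin k)) :
    ∑ i, v i * bregman φ g (y i) s - ∑ i, v i * bregman φ g (y i) (∑ i, v i • y i) =
      bregman φ g (∑ i, v i • y i) s := by
  rw [sum_mul_bregman φ g y hv1, sum_mul_bregman φ g y hv1, sub_self, inner_zero_left, bregman]
  ring

theorem bregman_mean_unique_minimizer_general {k n : ℕ}
    (S : Set (EuclideanSpace ℝ (Fin k)))
    (φ : EuclideanSpace ℝ (Fin k) → ℝ)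
    (g : EuclideanSpace ℝ (Fin k) → EuclideanSpace ℝ (Fin k))
    (hφ : StrictConvexOn ℝ S φ)
    (hg : ∀ q ∈ intrinsicInterior ℝ S, HasGradientAt φ (g q) q)
    (y : Fin n → EuclideanSpace ℝ (Fin k))
    (v : Fin n → ℝ) (hv1 : ∑ i, v i = 1)
    (μ : EuclideanSpace ℝ (Fin k)) (hμdef : μ = ∑ i, v i • y i)
    (hμ : μ ∈ intrinsicInterior ℝ S) :
    ∀ s ∈ intrinsicInterior ℝ S, s ≠ μ →
      ∑ i, v i * bregman φ g (y i) μ < ∑ i, v i * bregman φ g (y i) s := by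
  intro s hs hsμ
  have hpos : 0 < bregman φ g μ s :=
    bregman_pos hφ (intrinsicInterior_subset hμ) (intrinsicInterior_subset hs) hsμ.symm (hg s hs)
  have hgap := sum_mul_bregman_sub_sum_mul_bregman_mean φ g y hv1 s
  rw [← hμdef] at hgap
  linarith

/-- the expectation `μ` of a finitely supported random variable `Y` is the
unique minimizer over `ri(S)` of `s ↦ E[d_φ(Y, s)]`. -/
theorem bregman_mean_unique_minimizer {k n : ℕ}
    (S : Set (EuclideanSpace ℝ (Fin k))) (hS : Convex ℝ S)
    (φ : EuclideanSpace ℝ (Fin k) → ℝ)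
    (g : EuclideanSpace ℝ (Fin k) → EuclideanSpace ℝ (Fin k))
    (hφ : StrictConvexOn ℝ S φ)
    (hg : ∀ q ∈ intrinsicInterior ℝ S, HasGradientAt φ (g q) q)
    (y : Fin n → EuclideanSpace ℝ (Fin k)) (hy : ∀ i, y i ∈ S)
    (v : Fin n → ℝ) (hv : ∀ i, 0 ≤ v i) (hv1 : ∑ i, v i = 1)
    (μ : EuclideanSpace ℝ (Fin k)) (hμdef : μ = ∑ i, v i • y i)
    (hμ : μ ∈ intrinsicInterior ℝ S) :
    ∀ s ∈ intrinsicInterior ℝ S, s ≠ μ →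
      ∑ i, v i * bregman φ g (y i) μ < ∑ i, v i * bregman φ g (y i) s :=
  bregman_mean_unique_minimizer_general S φ g hφ hg y v hv1 μ hμdef hμ
end

section
/- Let {Y_i}_{i=1}^m be random variables, each taking values in a finite subset of S ⊆ ℝ^k with measure v_i and E_{v_i}[Y_i] ∈ ri(S), and let α_i > 0. Then the function J_φ(s) = Σ_{i=1}^m α_i E_{v_i}[d_φ(Y_i, s)] over s ∈ ri(S) has the unique minimizer s* = (Σ_i α_i E_{v_i}[Y_i]) / (Σ_i α_i). -/
open scoped RealInnerProductSpace BigOperators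

/-- Strict convexity gives a strict gradient inequality. -/
lemma breg_key {k : ℕ} {S : Set (EuclideanSpace ℝ (Fin k))} (hS : Convex ℝ S)
    {φ : EuclideanSpace ℝ (Fin k) → ℝ} (hφ : StrictConvexOn ℝ S φ)
    {s μ gs : EuclideanSpace ℝ (Fin k)} (hs : s ∈ S) (hμ : μ ∈ S) (hne : μ ≠ s)
    (hgrad : HasGradientAt φ gs s) : ⟪μ - s, gs⟫ < φ μ - φ s := by
  set L : ℝ →ᵃ[ℝ] EuclideanSpace ℝ (Fin k) := AffineMap.lineMap s μ with hL
  have hconv : StrictConvexOn ℝ (L ⁻¹' S) (φ ∘ L) := by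
    refine ⟨hS.affine_preimage L, ?_⟩
    intro a ha b hb hab t u ht hu htu
    simp only [Function.comp, Convex.combo_affine_apply htu]
    exact hφ.2 ha hb (fun h => hab (AffineMap.lineMap_injective ℝ (Ne.symm hne) h)) ht hu htu
  have hderiv : HasDerivAt (φ ∘ L) ⟪μ - s, gs⟫ 0 := by
    have hLd : HasDerivAt (fun t : ℝ => L t) (μ - s) 0 := by
      have : (fun t : ℝ => L t) = fun t : ℝ => t • (μ - s) + s := by
        funext t; simp only [hL, AffineMap.lineMap_apply_module]; module
      rw [this]
      simpa using ((hasDerivAt_id (0:ℝ)).smul_const (μ - s)).add_const s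
    have hF := (hasGradientAt_iff_hasFDerivAt.mp hgrad)
    have h0 : L (0:ℝ) = s := by simp [hL]
    have h2 : HasDerivAt (φ ∘ L) ((InnerProductSpace.toDual ℝ _ gs) (μ - s)) 0 :=
      HasFDerivAt.comp_hasDerivAt 0 (h0 ▸ hF) hLd
    have h3 : (InnerProductSpace.toDual ℝ _ gs) (μ - s) = ⟪μ - s, gs⟫ := by
      rw [InnerProductSpace.toDual_apply_apply]; exact real_inner_comm _ _
    rwa [h3] at h2
  have h01 : (0:ℝ) ∈ L ⁻¹' S ∧ (1:ℝ) ∈ L ⁻¹' S := by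
    constructor <;> simp [hL, hs, hμ]
  have := hconv.lt_slope_of_hasDerivAt h01.1 h01.2 one_pos hderiv
  simpa [slope_def_field, hL] using this

/-- the weighted mean of the expectations of finitely supported random
variables `Y_i` is the unique minimizer over `ri(S)` of
`s ↦ Σ_i α_i E_{v_i}[d_φ(Y_i, s)]`. -/
theorem weighted_bregman_mean_unique_minimizer {k m : ℕ} (hm : 0 < m)
    (S : Set (EuclideanSpace ℝ (Fin k))) (hS : Convex ℝ S)
    (φ : EuclideanSpace ℝ (Fin k) → ℝ)
    (g : EuclideanSpace ℝ (Fin k) → EuclideanSpace ℝ (Fin k))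
    (hφ : StrictConvexOn ℝ S φ)
    (hg : ∀ q ∈ intrinsicInterior ℝ S, HasGradientAt φ (g q) q)
    (ν : Fin m → ℕ)
    (Y : (i : Fin m) → Fin (ν i) → EuclideanSpace ℝ (Fin k))
    (hY : ∀ i j, Y i j ∈ S)
    (v : (i : Fin m) → Fin (ν i) → ℝ)
    (hv : ∀ i j, 0 ≤ v i j) (hv1 : ∀ i, ∑ j, v i j = 1)
    (hE : ∀ i, ∑ j, v i j • Y i j ∈ intrinsicInterior ℝ S)
    (α : Fin m → ℝ) (hα : ∀ i, 0 < α i)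
    (μ : EuclideanSpace ℝ (Fin k))
    (hμdef : μ = (∑ i, α i)⁻¹ • ∑ i, α i • ∑ j, v i j • Y i j)
    (hμ : μ ∈ intrinsicInterior ℝ S) :
    ∀ s ∈ intrinsicInterior ℝ S, s ≠ μ →
      (∑ i, α i * ∑ j, v i j * bregman φ g (Y i j) μ) <
        ∑ i, α i * ∑ j, v i j * bregman φ g (Y i j) s := by
  intro s hs hne
  have hμS : μ ∈ S := intrinsicInterior_subset hμ
  have hsS : s ∈ S := intrinsicInterior_subset hs
  haveI : Nonempty (Fin m) := ⟨⟨0, hm⟩⟩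
  have hA : 0 < ∑ i, α i := Finset.sum_pos (fun i _ => hα i) Finset.univ_nonempty
  have hB : ∑ i, α i • ∑ j, v i j • Y i j = (∑ i, α i) • μ := by
    rw [hμdef, smul_inv_smul₀ hA.ne']
  have key : ∀ q : EuclideanSpace ℝ (Fin k),
      (∑ i, α i * ∑ j, v i j * bregman φ g (Y i j) q)
        = (∑ i, α i * ∑ j, v i j * φ (Y i j)) - (∑ i, α i) * φ q
          - (∑ i, α i) * ⟪μ - q, g q⟫ := by
    intro q
    have inner_i : ∀ i, ∑ j, v i j * bregman φ g (Y i j) q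
        = (∑ j, v i j * φ (Y i j)) - φ q - ⟪(∑ j, v i j • Y i j) - q, g q⟫ := by
      intro i
      simp only [bregman]
      have h1 : ∀ j, v i j * (φ (Y i j) - φ q - ⟪Y i j - q, g q⟫)
          = v i j * φ (Y i j) - v i j * φ q - ⟪v i j • (Y i j - q), g q⟫ := fun j => by
        rw [real_inner_smul_left]; ring
      rw [Finset.sum_congr rfl (fun j _ => h1 j), Finset.sum_sub_distrib,
        Finset.sum_sub_distrib, ← sum_inner, ← Finset.sum_mul, hv1 i, one_mul]
      congr 2
      simp only [smul_sub, Finset.sum_sub_distrib, ← Finset.sum_smul, hv1 i, one_smul]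
    rw [Finset.sum_congr rfl (fun i _ => by rw [inner_i i])]
    have h2 : ∀ i, α i * ((∑ j, v i j * φ (Y i j)) - φ q - ⟪(∑ j, v i j • Y i j) - q, g q⟫)
        = α i * (∑ j, v i j * φ (Y i j)) - α i * φ q - ⟪α i • ((∑ j, v i j • Y i j) - q), g q⟫ :=
      fun i => by rw [real_inner_smul_left]; ring
    rw [Finset.sum_congr rfl (fun i _ => h2 i), Finset.sum_sub_distrib, Finset.sum_sub_distrib,
      ← sum_inner, ← Finset.sum_mul]
    have h3 : ∑ i, α i • ((∑ j, v i j • Y i j) - q) = (∑ i, α i) • (μ - q) := by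
      simp only [smul_sub, Finset.sum_sub_distrib, hB, ← Finset.sum_smul]
    rw [h3, real_inner_smul_left]
  have hpos : ⟪μ - s, g s⟫ < φ μ - φ s :=
    breg_key hS hφ hsS hμS (Ne.symm hne) (hg s hs)
  have hz : ⟪μ - μ, g μ⟫ = (0:ℝ) := by simp
  rw [key s, key μ, hz]
  have := mul_lt_mul_of_pos_left hpos hA
  nlinarith [this]
end

section
/- Consider the objective J_φ(s) = Σ_{i=1}^m α_i E_{v_i}[d_φ(Y_i, s)] with μ = (Σ_i α_i E_{v_i}[Y_i])/(Σ_i α_i). Then for all s ∈ ri(S): J_φ(s) − J_φ(μ) = (Σ_i α_i) · d_φ(μ, s). -/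
/-!
Each `d_φ(y, s) - d_φ(y, μ)` splits, by the three-point identity of Bregman divergences, into
`d_φ(μ, s)` plus a term `⟪y - μ, ∇φ(μ) - ∇φ(s)⟫` that is affine in `y`. The weighted family of
the `Y i` is a single finite distribution with weights `α i * v i j`, of total mass `∑ i, α i`
and barycentre `μ`, so averaging the affine term against it gives zero.
-/

open scoped RealInnerProductSpace BigOperators

section Bregman

variable {k : ℕ} (φ : EuclideanSpace ℝ (Fin k) → ℝ)
  (g : EuclideanSpace ℝ (Fin k) → EuclideanSpace ℝ (Fin k))

theorem bregman_sub_bregman (p q s : EuclideanSpace ℝ (Fin k)) :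
    bregman φ g p s - bregman φ g p q = bregman φ g q s + ⟪p - q, g q - g s⟫ := by
  simp only [bregman, inner_sub_left, inner_sub_right]
  ring

theorem sum_mul_bregman_sub_sum_mul_bregman {ι : Type*} (t : Finset ι) (w : ι → ℝ)
    (y : ι → EuclideanSpace ℝ (Fin k)) {q : EuclideanSpace ℝ (Fin k)}
    (hq : ∑ i ∈ t, w i • y i = (∑ i ∈ t, w i) • q) (s : EuclideanSpace ℝ (Fin k)) :
    ∑ i ∈ t, w i * bregman φ g (y i) s - ∑ i ∈ t, w i * bregman φ g (y i) q
      = (∑ i ∈ t, w i) * bregman φ g q s := by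
  have affine_part : ∑ i ∈ t, w i * ⟪y i - q, g q - g s⟫ = 0 := by
    simp only [inner_sub_left, mul_sub, Finset.sum_sub_distrib, ← real_inner_smul_left,
      ← sum_inner, hq, Finset.sum_smul, sub_self]
  rw [← Finset.sum_sub_distrib]
  simp only [← mul_sub, bregman_sub_bregman, mul_add, Finset.sum_add_distrib, affine_part,
    add_zero, Finset.sum_mul]

end Bregman

theorem weighted_bregman_objective_gap_general {k m : ℕ} (hm : 0 < m)
    (S : Set (EuclideanSpace ℝ (Fin k)))
    (φ : EuclideanSpace ℝ (Fin k) → ℝ)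
    (g : EuclideanSpace ℝ (Fin k) → EuclideanSpace ℝ (Fin k))
    (ν : Fin m → ℕ)
    (Y : (i : Fin m) → Fin (ν i) → EuclideanSpace ℝ (Fin k))
    (v : (i : Fin m) → Fin (ν i) → ℝ)
    (hv1 : ∀ i, ∑ j, v i j = 1)
    (α : Fin m → ℝ) (hα : ∀ i, 0 < α i)
    (μ : EuclideanSpace ℝ (Fin k))
    (hμdef : μ = (∑ i, α i)⁻¹ • ∑ i, α i • ∑ j, v i j • Y i j) :
    ∀ s ∈ intrinsicInterior ℝ S,
      (∑ i, α i * ∑ j, v i j * bregman φ g (Y i j) s) -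
        (∑ i, α i * ∑ j, v i j * bregman φ g (Y i j) μ)
      = (∑ i, α i) * bregman φ g μ s := by
  intro s _
  have hA : (∑ i, α i) ≠ 0 :=
    (Finset.sum_pos (fun i _ => hα i) (Finset.univ_nonempty_iff.mpr ⟨⟨0, hm⟩⟩)).ne'
  have mass : ∑ x : (i : Fin m) × Fin (ν i), α x.1 * v x.1 x.2 = ∑ i, α i := by
    rw [Fintype.sum_sigma]
    simp only [← Finset.mul_sum, hv1, mul_one]
  have flatten : ∀ t, ∑ i, α i * ∑ j, v i j * bregman φ g (Y i j) t
      = ∑ x : (i : Fin m) × Fin (ν i), α x.1 * v x.1 x.2 * bregman φ g (Y x.1 x.2) t := by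
    intro t
    rw [Fintype.sum_sigma]
    simp only [Finset.mul_sum, mul_assoc]
  have barycentre : ∑ x : (i : Fin m) × Fin (ν i), (α x.1 * v x.1 x.2) • Y x.1 x.2
      = (∑ x : (i : Fin m) × Fin (ν i), α x.1 * v x.1 x.2) • μ := by
    rw [mass, hμdef, smul_inv_smul₀ hA, Fintype.sum_sigma]
    simp only [Finset.smul_sum, mul_smul]
  rw [flatten, flatten, sum_mul_bregman_sub_sum_mul_bregman φ g _ _ _ barycentre, mass]

/-- for the weighted objective
`J_φ(s) = Σ_i α_i E_{v_i}[d_φ(Y_i, s)]` with weighted mean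
`μ = (Σ_i α_i E_{v_i}[Y_i]) / (Σ_i α_i)`, one has
`J_φ(s) − J_φ(μ) = (Σ_i α_i) · d_φ(μ, s)` for all `s ∈ ri(S)`. -/
theorem weighted_bregman_objective_gap {k m : ℕ} (hm : 0 < m)
    (S : Set (EuclideanSpace ℝ (Fin k))) (hS : Convex ℝ S)
    (φ : EuclideanSpace ℝ (Fin k) → ℝ)
    (g : EuclideanSpace ℝ (Fin k) → EuclideanSpace ℝ (Fin k))
    (hφ : StrictConvexOn ℝ S φ)
    (hg : ∀ q ∈ intrinsicInterior ℝ S, HasGradientAt φ (g q) q)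
    (ν : Fin m → ℕ)
    (Y : (i : Fin m) → Fin (ν i) → EuclideanSpace ℝ (Fin k))
    (hY : ∀ i j, Y i j ∈ S)
    (v : (i : Fin m) → Fin (ν i) → ℝ)
    (hv : ∀ i j, 0 ≤ v i j) (hv1 : ∀ i, ∑ j, v i j = 1)
    (hE : ∀ i, ∑ j, v i j • Y i j ∈ intrinsicInterior ℝ S)
    (α : Fin m → ℝ) (hα : ∀ i, 0 < α i)
    (μ : EuclideanSpace ℝ (Fin k))
    (hμdef : μ = (∑ i, α i)⁻¹ • ∑ i, α i • ∑ j, v i j • Y i j)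
    (hμ : μ ∈ intrinsicInterior ℝ S) :
    ∀ s ∈ intrinsicInterior ℝ S,
      (∑ i, α i * ∑ j, v i j * bregman φ g (Y i j) s) -
        (∑ i, α i * ∑ j, v i j * bregman φ g (Y i j) μ)
      = (∑ i, α i) * bregman φ g μ s :=
  weighted_bregman_objective_gap_general hm S φ g ν Y v hv1 α hα μ hμdef
end

section
/- Quadratic form identity for the Hessian of J with I-divergence: with d_φ the generalized I-divergence, the Hessian H of J(y^{(l)}, y^{(r)}) satisfies z^† H z = Σ_{i=1}^n Σ_{ℓ=1}^k π_{iℓ} for the vector z = ((y_i^{(l)})_i, (y_i^{(r)})_i); consequently, if Σ_{i,ℓ} π_{iℓ} > 0, then z^† H z > 0 for this particular z. -/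
/-!
Each I-divergence term of `J` coupling `y⁽ˡ⁾` with `y⁽ʳ⁾` is jointly homogeneous of degree one,
so by Euler's identity its Hessian annihilates `z`: in `zᵀ H z` the coupling parts of the diagonal
blocks cancel against twice the off-diagonal blocks. What survives is the fitting term
`Σᵢ d_φ(πᵢ, yᵢ⁽ʳ⁾)`, whose Hessian `diag(π/y²)` contributes `y · (π / y²) · y = π`.
-/

open Finset

theorem sum_sum_erase_comm {ι M : Type*} [Fintype ι] [DecidableEq ι] [AddCommMonoid M]
    (f : ι → ι → M) : ∑ j, ∑ i ∈ univ.erase j, f i j = ∑ i, ∑ j ∈ univ.erase i, f i j :=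
  sum_comm' fun j i => by simp [ne_comm]

theorem mul_div_sq_mul_cancel {K : Type*} [Field K] {y : K} (hy : y ≠ 0) (x : K) :
    y * (x / y ^ 2) * y = x := by
  field_simp

theorem hessian_quadratic_form_identity_general {k n : ℕ}
    (π yl yr : Fin n → Fin k → ℝ)
    (hyr : ∀ i ℓ, 0 < yr i ℓ)
    (s : Fin n → Fin n → ℝ) (α lam : ℝ) :
    -- `Q = zᵀ H z`, assembled block by block from the Hessian of `J`:
    (∑ i, (α * (∑ j ∈ univ.erase i, s i j) + lam) * ∑ ℓ, yl i ℓ * (1 / yl i ℓ) * yl i ℓ)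
      + (∑ j, ∑ ℓ, yr j ℓ *
          ((π j ℓ + α * (∑ i ∈ univ.erase j, s i j * yl i ℓ) + lam * yl j ℓ) /
            (yr j ℓ) ^ 2) * yr j ℓ)
      + 2 * (∑ i, ∑ j ∈ univ.erase i, (-(α * s i j)) * ∑ ℓ, yl i ℓ * (1 / yr j ℓ) * yr j ℓ)
      + 2 * (∑ i, (-lam) * ∑ ℓ, yl i ℓ * (1 / yr i ℓ) * yr i ℓ)
      = ∑ i, ∑ ℓ, π i ℓ ∧
    ((0 < ∑ i, ∑ ℓ, π i ℓ) →
      0 < (∑ i, (α * (∑ j ∈ univ.erase i, s i j) + lam) * ∑ ℓ, yl i ℓ * (1 / yl i ℓ) * yl i ℓ)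
        + (∑ j, ∑ ℓ, yr j ℓ *
            ((π j ℓ + α * (∑ i ∈ univ.erase j, s i j * yl i ℓ) + lam * yl j ℓ) /
              (yr j ℓ) ^ 2) * yr j ℓ)
        + 2 * (∑ i, ∑ j ∈ univ.erase i, (-(α * s i j)) * ∑ ℓ, yl i ℓ * (1 / yr j ℓ) * yr j ℓ)
        + 2 * (∑ i, (-lam) * ∑ ℓ, yl i ℓ * (1 / yr i ℓ) * yr i ℓ)) := by
  have hll (i : Fin n) (ℓ : Fin k) : yl i ℓ * (1 / yl i ℓ) * yl i ℓ = yl i ℓ := by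
    rw [one_div, mul_inv_mul_cancel]
  have hlr (i j : Fin n) (ℓ : Fin k) : yl i ℓ * (1 / yr j ℓ) * yr j ℓ = yl i ℓ := by
    rw [one_div, inv_mul_cancel_right₀ (hyr j ℓ).ne']
  have hrr (j : Fin n) (ℓ : Fin k) (x : ℝ) : yr j ℓ * (x / yr j ℓ ^ 2) * yr j ℓ = x :=
    mul_div_sq_mul_cancel (hyr j ℓ).ne' x
  have hcoupling : ∑ j, ∑ ℓ, ∑ i ∈ univ.erase j, s i j * yl i ℓ
      = ∑ i, ∑ j ∈ univ.erase i, s i j * ∑ ℓ, yl i ℓ := by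
    simp_rw [mul_sum]
    rw [← sum_sum_erase_comm]
    exact sum_congr rfl fun j _ => sum_comm
  rw [and_iff_left_of_imp fun key h => key ▸ h]
  simp only [hll, hlr, hrr, hcoupling, sum_add_distrib, add_mul, neg_mul, sum_neg_distrib,
    ← mul_sum, ← sum_mul, mul_assoc]
  ring

/-- quadratic form identity for the Hessian of `J` with the generalized
I-divergence.  Evaluating the block Hessian of `J` at `z = ((yᵢ⁽ˡ⁾)ᵢ, (yᵢ⁽ʳ⁾)ᵢ)` gives
`zᵀ H z = Σᵢ Σ_ℓ π_{iℓ}`; consequently `zᵀ H z > 0` whenever `Σᵢ Σ_ℓ π_{iℓ} > 0`. -/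
theorem hessian_quadratic_form_identity {k n : ℕ}
    (π yl yr : Fin n → Fin k → ℝ)
    (hyl : ∀ i ℓ, 0 < yl i ℓ) (hyr : ∀ i ℓ, 0 < yr i ℓ)
    (s : Fin n → Fin n → ℝ) (α lam : ℝ) :
    -- `Q = zᵀ H z`, assembled block by block from the Hessian of `J`:
    (∑ i, (α * (∑ j ∈ univ.erase i, s i j) + lam) * ∑ ℓ, yl i ℓ * (1 / yl i ℓ) * yl i ℓ)
      + (∑ j, ∑ ℓ, yr j ℓ *
          ((π j ℓ + α * (∑ i ∈ univ.erase j, s i j * yl i ℓ) + lam * yl j ℓ) /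
            (yr j ℓ) ^ 2) * yr j ℓ)
      + 2 * (∑ i, ∑ j ∈ univ.erase i, (-(α * s i j)) * ∑ ℓ, yl i ℓ * (1 / yr j ℓ) * yr j ℓ)
      + 2 * (∑ i, (-lam) * ∑ ℓ, yl i ℓ * (1 / yr i ℓ) * yr i ℓ)
      = ∑ i, ∑ ℓ, π i ℓ ∧
    ((0 < ∑ i, ∑ ℓ, π i ℓ) →
      0 < (∑ i, (α * (∑ j ∈ univ.erase i, s i j) + lam) * ∑ ℓ, yl i ℓ * (1 / yl i ℓ) * yl i ℓ)
        + (∑ j, ∑ ℓ, yr j ℓ *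
            ((π j ℓ + α * (∑ i ∈ univ.erase j, s i j * yl i ℓ) + lam * yl j ℓ) /
              (yr j ℓ) ^ 2) * yr j ℓ)
        + 2 * (∑ i, ∑ j ∈ univ.erase i, (-(α * s i j)) * ∑ ℓ, yl i ℓ * (1 / yr j ℓ) * yr j ℓ)
        + 2 * (∑ i, (-lam) * ∑ ℓ, yl i ℓ * (1 / yr i ℓ) * yr i ℓ)) :=
  hessian_quadratic_form_identity_general π yl yr hyr s α lam
end
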